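/- Let n ≥ 2 and let B = ℂ[x₀,x₁,x₂,x₃] be graded with deg(x₀)=1, deg(x₁)=2, deg(x₂)=2n−1, deg(x₃)=4n−3. If f ∈ B is homogeneous of degree 4n−2 and the coefficients of the monomials x₀x₃, x₂², and x₁^{2n−1} in f are all nonzero, then there is a graded ℂ-algebra automorphism of B sending f to a scalar multiple of x₀x₃ + x₁^{2n−1} + x₂². -/

import Mathlib

/-!
Every monomial of weight `4n-2` other than `x₀x₃`, `x₂²` and `x₁^(2n-1)` is divisible by `x₀`,
has `x₂`-degree at most one and does not contain `x₃`, so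
`f = α x₀x₃ + β x₂² + γ x₁^(2n-1) + x₀ (x₂ P + Q)` with `P, Q ∈ ℂ[x₀, x₁]`.
Completing the square by `x₂ ↦ s x₂ - x₀ P / (2β)` with `β s² = γ` removes the term `x₀x₂P`,
and `x₃ ↦ (γ/α) x₃ - Q'/α` then absorbs the remaining `x₀ Q'`. Both substitutions are
triangular and send each variable to a weighted homogeneous polynomial of its own weight, so
they are graded automorphisms.
-/

open MvPolynomial

noncomputable section

/-- The weights of the variables `x₀, x₁, x₂, x₃`. -/
def wgt (n : ℕ) : Fin 4 → ℤ := ![1, 2, 2*(n:ℤ)-1, 4*(n:ℤ)-3]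

namespace MvPolynomial

variable {σ R M : Type*}

section Supported

variable [CommSemiring R] {s : Set σ} {p : MvPolynomial σ R}

theorem mem_supported_of_coeff_ne_zero (h : ∀ d, coeff d p ≠ 0 → ∀ i ∉ s, d i = 0) :
    p ∈ supported R s := by
  classical
  rw [mem_supported]
  intro i hi
  obtain ⟨d, hd, hid⟩ := (mem_vars_iff_mem_support i).1 hi
  by_contra his
  exact Finsupp.mem_support_iff.1 hid (h d (mem_support_iff.1 hd) i his)

theorem aeval_eq_self_of_mem_supported {g : σ → MvPolynomial σ R} (hg : ∀ i ∈ s, g i = X i)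
    (hp : p ∈ supported R s) : aeval g p = p := by
  have : supported R s ≤ AlgHom.equalizer (aeval g) (AlgHom.id R _) :=
    Algebra.adjoin_le (by rintro _ ⟨i, hi, rfl⟩; simp [hg i hi])
  exact this hp

end Supported

section Weighted

variable [CommSemiring R] {w : σ → M} {p : MvPolynomial σ R}

theorem IsWeightedHomogeneous.aeval [AddCommMonoid M] {m : M} {g : σ → MvPolynomial σ R}
    (hg : ∀ i, (g i).IsWeightedHomogeneous w (w i)) (hp : p.IsWeightedHomogeneous w m) :
    (aeval g p).IsWeightedHomogeneous w m := by
  rw [p.as_sum, map_sum]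
  refine IsWeightedHomogeneous.sum _ _ _ fun d hd => ?_
  rw [aeval_monomial, ← hp (mem_support_iff.mp hd), ← zero_add (Finsupp.weight w d),
    Finsupp.prod, Finsupp.weight_apply, Finsupp.sum]
  exact (isWeightedHomogeneous_C w _).mul
    (IsWeightedHomogeneous.prod _ _ _ fun i _ => (hg i).pow (d i))

theorem IsWeightedHomogeneous.divMonomial [AddCancelCommMonoid M] {m m' : M}
    (hp : p.IsWeightedHomogeneous w m) {s : σ →₀ ℕ} (h : Finsupp.weight w s + m' = m) :
    (p.divMonomial s).IsWeightedHomogeneous w m' := by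
  intro d hd
  have := hp hd
  rw [map_add, ← h] at this
  exact add_left_cancel this

theorem IsWeightedHomogeneous.modMonomial [AddCommMonoid M] {m : M}
    (hp : p.IsWeightedHomogeneous w m) (s : σ →₀ ℕ) :
    (p.modMonomial s).IsWeightedHomogeneous w m := by
  intro d hd
  by_cases h : s ≤ d
  · simp [coeff_modMonomial_of_le _ h] at hd
  · exact hp (by rwa [coeff_modMonomial_of_not_le _ h] at hd)

def IsGradedAut [AddCommMonoid M] (w : σ → M) (φ : MvPolynomial σ R ≃ₐ[R] MvPolynomial σ R) :
    Prop :=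
  ∀ (m : M) (p : MvPolynomial σ R),
    p.IsWeightedHomogeneous w m → (φ p).IsWeightedHomogeneous w m

theorem IsGradedAut.trans [AddCommMonoid M] {φ ψ : MvPolynomial σ R ≃ₐ[R] MvPolynomial σ R}
    (hφ : IsGradedAut w φ) (hψ : IsGradedAut w ψ) : IsGradedAut w (φ.trans ψ) :=
  fun m p hp => hψ m _ (hφ m p hp)

end Weighted

section Elementary

variable [CommRing R] [DecidableEq σ] {i : σ} {g : MvPolynomial σ R}

theorem aeval_update_eq_self (hg : g ∈ supported R {i}ᶜ) (q : MvPolynomial σ R) :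
    aeval (Function.update X i q) g = g :=
  aeval_eq_self_of_mem_supported (fun _ hj => Function.update_of_ne hj _ _) hg

def elementaryAut (i : σ) (a : Rˣ) (g : MvPolynomial σ R)
    (hg : g ∈ supported R {i}ᶜ) : MvPolynomial σ R ≃ₐ[R] MvPolynomial σ R :=
  AlgEquiv.ofAlgHom (aeval (Function.update X i (C (a : R) * X i + g)))
    (aeval (Function.update X i (C ((a⁻¹ : Rˣ) : R) * (X i - g))))
    (algHom_ext fun j => by
      rcases eq_or_ne j i with rfl | hj
      · have hC : (C (a : R) * C ((a⁻¹ : Rˣ) : R) : MvPolynomial σ R) = 1 := by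
          rw [← map_mul, Units.mul_inv, map_one]
        simp only [AlgHom.comp_apply, aeval_X, Function.update_self, map_mul, map_sub, aeval_C,
          algebraMap_eq, aeval_update_eq_self hg, AlgHom.id_apply]
        linear_combination (X j) * hC
      · simp [hj])
    (algHom_ext fun j => by
      rcases eq_or_ne j i with rfl | hj
      · have hC : (C (a : R) * C ((a⁻¹ : Rˣ) : R) : MvPolynomial σ R) = 1 := by
          rw [← map_mul, Units.mul_inv, map_one]
        simp only [AlgHom.comp_apply, aeval_X, Function.update_self, map_mul, map_add, aeval_C,
          algebraMap_eq, aeval_update_eq_self hg, AlgHom.id_apply]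
        linear_combination (X j - g) * hC
      · simp [hj])

variable {a : Rˣ} (hg : g ∈ supported R {i}ᶜ)

@[simp]
theorem elementaryAut_X_self : elementaryAut i a g hg (X i) = C (a : R) * X i + g := by
  simp [elementaryAut]

@[simp]
theorem elementaryAut_C (c : R) : elementaryAut i a g hg (C c) = C c :=
  (elementaryAut i a g hg).commutes c

theorem elementaryAut_X_of_ne {j : σ} (hj : j ≠ i) : elementaryAut i a g hg (X j) = X j := by
  simp [elementaryAut, hj]

theorem elementaryAut_of_mem_supported {p : MvPolynomial σ R} (hp : p ∈ supported R {i}ᶜ) :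
    elementaryAut i a g hg p = p :=
  aeval_update_eq_self hp _

theorem isGradedAut_elementaryAut [AddCommMonoid M] {w : σ → M}
    (hgw : g.IsWeightedHomogeneous w (w i)) : IsGradedAut w (elementaryAut i a g hg) := by
  refine fun m p hp => IsWeightedHomogeneous.aeval (fun j => ?_) hp
  rcases eq_or_ne j i with rfl | hj
  · simpa using ((isWeightedHomogeneous_X R w j).C_mul _).add hgw
  · simpa [hj] using isWeightedHomogeneous_X R w j

end Elementary

section FourVariables

variable [CommRing R]

theorem exists_eq_X_mul_X_mul_add [AddCancelCommMonoid M] {w : Fin 4 → M}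
    {m mP mQ : M} (hmP : w 0 + w 2 + mP = m) (hmQ : w 0 + mQ = m)
    {r : MvPolynomial (Fin 4) R} (hr : r.IsWeightedHomogeneous w m)
    (hsupp : ∀ d, coeff d r ≠ 0 → 1 ≤ d 0 ∧ d 2 ≤ 1 ∧ d 3 = 0) :
    ∃ P Q : MvPolynomial (Fin 4) R, P ∈ supported R {0, 1} ∧ Q ∈ supported R {0, 1} ∧
      P.IsWeightedHomogeneous w mP ∧ Q.IsWeightedHomogeneous w mQ ∧
      r = X 0 * (X 2 * P + Q) := by
  set r₁ := r.divMonomial (Finsupp.single 0 1)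
  have hr₀ : r.modMonomial (Finsupp.single 0 1) = 0 := by
    ext d
    by_cases h : Finsupp.single 0 1 ≤ d
    · simp [coeff_modMonomial_of_le _ h]
    · rw [coeff_modMonomial_of_not_le _ h, coeff_zero]
      by_contra hd
      exact h (Finsupp.single_le_iff.2 (hsupp d hd).1)
  have hr₁ : r₁.IsWeightedHomogeneous w mQ :=
    hr.divMonomial (by rw [Finsupp.weight_single, one_smul, hmQ])
  refine ⟨r₁.divMonomial (Finsupp.single 2 1), r₁.modMonomial (Finsupp.single 2 1), ?_, ?_,
    hr₁.divMonomial ?_, hr₁.modMonomial _, ?_⟩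
  · refine mem_supported_of_coeff_ne_zero fun d hd i hi => ?_
    have := hsupp _ hd
    fin_cases i <;> simp_all
  · refine mem_supported_of_coeff_ne_zero fun d hd i hi => ?_
    by_cases h : Finsupp.single 2 1 ≤ d
    · simp [coeff_modMonomial_of_le _ h] at hd
    rw [coeff_modMonomial_of_not_le _ h] at hd
    have := hsupp _ hd
    rw [Finsupp.single_le_iff] at h
    fin_cases i <;> simp_all
  · rw [Finsupp.weight_single, one_smul]
    exact add_left_cancel (a := w 0) (by rw [← add_assoc, hmP, hmQ])
  · calc r = X 0 * r₁ + r.modMonomial (Finsupp.single 0 1) :=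
          (divMonomial_add_modMonomial_single r 0).symm
      _ = _ := by rw [hr₀, add_zero, divMonomial_add_modMonomial_single]

end FourVariables

section Normalization

variable {K : Type*} [Field K] [AddCommMonoid M] {w : Fin 4 → M}

theorem exists_isGradedAut_complete_square [NeZero (2 : K)] {mP : M} (hw2 : w 0 + mP = w 2)
    (hw3 : w 0 + 2 • mP = w 3) {P Q : MvPolynomial (Fin 4) K} (hP : P ∈ supported K {0, 1})
    (hQ : Q ∈ supported K {0, 1}) (hPw : P.IsWeightedHomogeneous w mP)
    (hQw : Q.IsWeightedHomogeneous w (w 3)) {β s : K} (hβ : β ≠ 0) (hs : s ≠ 0) (α γ : K)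
    (m : ℕ) :
    ∃ φ, IsGradedAut w φ ∧ ∃ Q' ∈ supported K {0, 1}, Q'.IsWeightedHomogeneous w (w 3) ∧
      φ (C α * (X 0 * X 3) + C β * X 2 ^ 2 + C γ * X 1 ^ m + X 0 * (X 2 * P + Q)) =
        C α * (X 0 * X 3) + C (β * s ^ 2) * X 2 ^ 2 + C γ * X 1 ^ m + X 0 * Q' := by
  have h01 : supported K ({0, 1} : Set (Fin 4)) ≤ supported K {2}ᶜ :=
    supported_mono (by simp)
  have hX0 : (X 0 : MvPolynomial (Fin 4) K) ∈ supported K {0, 1} := X_mem_supported.2 (by simp)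
  have hg : -(C (2 * β)⁻¹ * (X 0 * P)) ∈ supported K {2}ᶜ :=
    h01 (neg_mem (mul_mem (Subalgebra.algebraMap_mem _ _) (mul_mem hX0 hP)))
  refine ⟨elementaryAut 2 (Units.mk0 s hs) _ hg, isGradedAut_elementaryAut hg ?_,
    Q - C (4 * β)⁻¹ * (X 0 * P ^ 2), sub_mem hQ (mul_mem (Subalgebra.algebraMap_mem _ _)
      (mul_mem hX0 (pow_mem hP 2))), ?_, ?_⟩
  · exact hw2 ▸ (((isWeightedHomogeneous_X K w 0).mul hPw).C_mul _).neg
  · exact hQw.sub (hw3 ▸ ((isWeightedHomogeneous_X K w 0).mul (hPw.pow 2)).C_mul _)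
  have ht : (2 * C β * C (2 * β)⁻¹ : MvPolynomial (Fin 4) K) = 1 := by
    rw [← map_ofNat C, ← map_mul, ← map_mul, mul_inv_cancel₀ (mul_ne_zero two_ne_zero hβ), map_one]
  have hu : (C (4 * β)⁻¹ : MvPolynomial (Fin 4) K) = C (2 * β)⁻¹ - C β * C (2 * β)⁻¹ ^ 2 := by
    rw [← map_pow, ← map_mul, ← map_sub, show (4 : K) * β = 2 * (2 * β) by ring]
    congr 1
    field_simp
    ring
  simp only [map_add, map_mul, map_pow, elementaryAut_X_self, elementaryAut_C,
    elementaryAut_X_of_ne hg (show (0 : Fin 4) ≠ 2 by decide),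
    elementaryAut_X_of_ne hg (show (1 : Fin 4) ≠ 2 by decide),
    elementaryAut_X_of_ne hg (show (3 : Fin 4) ≠ 2 by decide),
    elementaryAut_of_mem_supported hg (h01 hP), elementaryAut_of_mem_supported hg (h01 hQ),
    Units.val_mk0]
  linear_combination (-(C s * X 0 * X 2 * P)) * ht + (X 0 ^ 2 * P ^ 2) * hu

theorem exists_isGradedAut_absorb {Q : MvPolynomial (Fin 4) K} (hQ : Q ∈ supported K {3}ᶜ)
    (hQw : Q.IsWeightedHomogeneous w (w 3)) {α γ : K} (hα : α ≠ 0) (hγ : γ ≠ 0) (m : ℕ) :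
    ∃ φ, IsGradedAut w φ ∧
      φ (C α * (X 0 * X 3) + C γ * X 2 ^ 2 + C γ * X 1 ^ m + X 0 * Q) =
        C γ * (X 0 * X 3 + X 1 ^ m + X 2 ^ 2) := by
  have hg : -(C α⁻¹ * Q) ∈ supported K {3}ᶜ :=
    neg_mem (mul_mem (Subalgebra.algebraMap_mem _ _) hQ)
  refine ⟨elementaryAut 3 (Units.mk0 (γ / α) (div_ne_zero hγ hα)) _ hg,
    isGradedAut_elementaryAut hg (by simpa using (hQw.C_mul _).neg), ?_⟩
  have hαγ : (C α * C (γ / α) : MvPolynomial (Fin 4) K) = C γ := by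
    rw [← map_mul, mul_div_cancel₀ _ hα]
  have hαα : (C α * C α⁻¹ : MvPolynomial (Fin 4) K) = 1 := by
    rw [← map_mul, mul_inv_cancel₀ hα, map_one]
  simp only [map_add, map_mul, map_pow, elementaryAut_X_self, elementaryAut_C,
    elementaryAut_X_of_ne hg (show (0 : Fin 4) ≠ 3 by decide),
    elementaryAut_X_of_ne hg (show (1 : Fin 4) ≠ 3 by decide),
    elementaryAut_X_of_ne hg (show (2 : Fin 4) ≠ 3 by decide),
    elementaryAut_of_mem_supported hg hQ, Units.val_mk0]
  linear_combination (X 0 * X 3) * hαγ - (X 0 * Q) * hαα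

end Normalization

end MvPolynomial

theorem weight_wgt (n : ℕ) (d : Fin 4 →₀ ℕ) :
    Finsupp.weight (wgt n) d = d 0 + 2 * d 1 + (2 * n - 1) * d 2 + (4 * n - 3) * d 3 := by
  simp [Finsupp.weight_apply, Finsupp.sum_fintype, Fin.sum_univ_four, wgt]
  ring

theorem cases_of_weight_wgt_eq {n : ℕ} (hn : 2 ≤ n) {d : Fin 4 →₀ ℕ}
    (hd : Finsupp.weight (wgt n) d = 4 * n - 2) :
    d = Finsupp.single 0 1 + Finsupp.single 3 1 ∨ d = Finsupp.single 2 2 ∨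
      d = Finsupp.single 1 (2 * n - 1) ∨ (1 ≤ d 0 ∧ d 2 ≤ 1 ∧ d 3 = 0) := by
  rw [weight_wgt] at hd
  have hn' : (2 : ℤ) ≤ n := by exact_mod_cast hn
  have h3 : d 3 ≤ 1 := by
    by_contra! h
    have : (2 : ℤ) ≤ d 3 := by exact_mod_cast h
    nlinarith [Int.natCast_nonneg (d 0), Int.natCast_nonneg (d 1), Int.natCast_nonneg (d 2)]
  have h2 : d 2 ≤ 2 := by
    by_contra! h
    have : (3 : ℤ) ≤ d 2 := by exact_mod_cast h
    nlinarith [Int.natCast_nonneg (d 0), Int.natCast_nonneg (d 1), Int.natCast_nonneg (d 3)]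
  interval_cases h3' : d 3 <;> interval_cases h2' : d 2 <;>
    simp only [Nat.cast_zero, Nat.cast_one, Nat.cast_ofNat, mul_zero, mul_one, add_zero] at hd
  · rcases Nat.eq_zero_or_pos (d 0) with h0 | h0
    · refine Or.inr (Or.inr (Or.inl ?_))
      ext i; fin_cases i <;> simp <;> omega
    · exact Or.inr (Or.inr (Or.inr ⟨h0, zero_le_one, rfl⟩))
  · exact Or.inr (Or.inr (Or.inr ⟨by omega, le_rfl, rfl⟩))
  · refine Or.inr (Or.inl ?_)
    ext i; fin_cases i <;> simp <;> omega
  · refine Or.inl ?_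
    ext i; fin_cases i <;> simp <;> omega
  · omega
  · omega

theorem exists_decomposition_of_isWeightedHomogeneous {R : Type*} [CommRing R] {n : ℕ}
    (hn : 2 ≤ n) {f : MvPolynomial (Fin 4) R}
    (hf : f.IsWeightedHomogeneous (wgt n) (4 * (n : ℤ) - 2)) :
    ∃ P Q : MvPolynomial (Fin 4) R, P ∈ supported R {0, 1} ∧ Q ∈ supported R {0, 1} ∧
      P.IsWeightedHomogeneous (wgt n) (2 * (n : ℤ) - 2) ∧
      Q.IsWeightedHomogeneous (wgt n) (wgt n 3) ∧
      f = C (coeff (Finsupp.single 0 1 + Finsupp.single 3 1) f) * (X 0 * X 3) +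
        C (coeff (Finsupp.single 2 2) f) * X 2 ^ 2 +
        C (coeff (Finsupp.single 1 (2 * n - 1)) f) * X 1 ^ (2 * n - 1) + X 0 * (X 2 * P + Q) := by
  have h₁₂ : (Finsupp.single 0 1 + Finsupp.single 3 1 : Fin 4 →₀ ℕ) ≠ Finsupp.single 2 2 :=
    fun h => by simpa using DFunLike.congr_fun h 3
  have h₁₃ : (Finsupp.single 0 1 + Finsupp.single 3 1 : Fin 4 →₀ ℕ) ≠
      Finsupp.single 1 (2 * n - 1) :=
    fun h => by simpa using DFunLike.congr_fun h 3
  have h₂₃ : (Finsupp.single 2 2 : Fin 4 →₀ ℕ) ≠ Finsupp.single 1 (2 * n - 1) :=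
    fun h => by simpa using DFunLike.congr_fun h 2
  set r := f - monomial (Finsupp.single 0 1 + Finsupp.single 3 1)
    (coeff (Finsupp.single 0 1 + Finsupp.single 3 1) f) -
    monomial (Finsupp.single 2 2) (coeff (Finsupp.single 2 2) f) -
    monomial (Finsupp.single 1 (2 * n - 1)) (coeff (Finsupp.single 1 (2 * n - 1)) f) with hr
  have hrw : r.IsWeightedHomogeneous (wgt n) (4 * n - 2) := by
    refine ((hf.sub (isWeightedHomogeneous_monomial _ _ _ ?_)).sub
      (isWeightedHomogeneous_monomial _ _ _ ?_)).sub (isWeightedHomogeneous_monomial _ _ _ ?_)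
    all_goals simp [weight_wgt]; omega
  have hr₀ : coeff (Finsupp.single 0 1 + Finsupp.single 3 1) r = 0 ∧
      coeff (Finsupp.single 2 2) r = 0 ∧ coeff (Finsupp.single 1 (2 * n - 1)) r = 0 := by
    simp only [hr, coeff_sub, coeff_monomial, h₁₂, h₁₃, h₂₃, h₁₂.symm, h₁₃.symm, h₂₃.symm,
      ↓reduceIte, sub_self, sub_zero, and_self]
  have hsupp : ∀ d, coeff d r ≠ 0 → 1 ≤ d 0 ∧ d 2 ≤ 1 ∧ d 3 = 0 := by
    intro d hd
    rcases cases_of_weight_wgt_eq hn (hrw hd) with rfl | rfl | rfl | h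
    exacts [absurd hr₀.1 hd, absurd hr₀.2.1 hd, absurd hr₀.2.2 hd, h]
  obtain ⟨P, Q, hP, hQ, hPw, hQw, hrPQ⟩ := exists_eq_X_mul_X_mul_add
    (mP := 2 * (n : ℤ) - 2) (mQ := wgt n 3) (by simp [wgt]; ring) (by simp [wgt]; ring) hrw hsupp
  refine ⟨P, Q, hP, hQ, hPw, hQw, ?_⟩
  rw [← hrPQ, hr, C_mul_X_pow_eq_monomial, C_mul_X_pow_eq_monomial, X, X, monomial_mul,
    C_mul_monomial]
  simp only [mul_one]
  abel

/-- If `f ∈ B = ℂ[x₀,x₁,x₂,x₃]` (weights `1, 2, 2n−1, 4n−3`) is weighted homogeneous of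
degree `4n−2` and the coefficients of `x₀x₃`, `x₂²` and `x₁^(2n−1)` in `f` are nonzero, then
some graded `ℂ`-algebra automorphism of `B` sends `f` to a nonzero scalar multiple of
`x₀x₃ + x₁^(2n−1) + x₂²`. -/
theorem stmt_0 (n : ℕ) (hn : 2 ≤ n) (f : MvPolynomial (Fin 4) ℂ)
    (hf : f.IsWeightedHomogeneous (wgt n) (4*(n:ℤ)-2))
    (h03 : MvPolynomial.coeff (Finsupp.single 0 1 + Finsupp.single 3 1) f ≠ 0)
    (h2 : MvPolynomial.coeff (Finsupp.single 2 2) f ≠ 0)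
    (h1 : MvPolynomial.coeff (Finsupp.single 1 (2*n-1)) f ≠ 0) :
    ∃ (φ : MvPolynomial (Fin 4) ℂ ≃ₐ[ℂ] MvPolynomial (Fin 4) ℂ) (c : ℂ), c ≠ 0 ∧
      (∀ (k : ℤ) (p : MvPolynomial (Fin 4) ℂ),
        p.IsWeightedHomogeneous (wgt n) k → (φ p).IsWeightedHomogeneous (wgt n) k) ∧
      φ f = c • (X 0 * X 3 + X 1 ^ (2*n-1) + X 2 ^ 2) := by
  obtain ⟨P, Q, hP, hQ, hPw, hQw, hfPQ⟩ := exists_decomposition_of_isWeightedHomogeneous hn hf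
  obtain ⟨s, hs⟩ := IsAlgClosed.exists_pow_nat_eq
    (coeff (Finsupp.single 1 (2 * n - 1)) f / coeff (Finsupp.single 2 2) f) two_pos
  have hs0 : s ≠ 0 := ne_zero_pow two_ne_zero (hs ▸ div_ne_zero h1 h2)
  obtain ⟨φ₁, hφ₁, Q', hQ', hQ'w, hφ₁f⟩ := exists_isGradedAut_complete_square
    (by simp [wgt]; ring) (by simp [wgt]; ring) hP hQ hPw hQw h2 hs0 _ _ (2 * n - 1)
  rw [hs, mul_div_cancel₀ _ h2] at hφ₁f
  obtain ⟨φ₂, hφ₂, hφ₂f⟩ := exists_isGradedAut_absorb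
    (supported_mono (by simp) hQ') hQ'w h03 h1 (2 * n - 1)
  refine ⟨φ₁.trans φ₂, _, h1, hφ₁.trans hφ₂, ?_⟩
  rw [AlgEquiv.trans_apply]
  nth_rw 1 [hfPQ]
  rw [hφ₁f, hφ₂f, smul_eq_C_mul]

end
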